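/- arXiv:2210.03891 — 7 statements merged into one kernel-verified Lean document; each statement's English description precedes it below -/
import Mathlib

section
/- Let R be a commutative Noetherian ring and let M be a finitely generated R-submodule of the total ring of fractions Q(R) containing the image of a non-zero-divisor of R (a regular fractional ideal). Then for every short exact sequence 0 → K → P → M → 0 of R-modules with P finitely generated projective, the trace ideal Tr_R(M) equals the annihilator ann_R Ext^1_R(M, K). -/
/-!
Both ideals are compared with the ideal of those `r : R` for which `r • id_K` extends along
`ι : K → P`. Computing `Ext¹(M, K)` with a projective resolution beginning with `P → M` shows
that it is `End K` modulo the endomorphisms that extend to `P`, so its annihilator is exactly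
this ideal. On the other side, every functional `f` on a submodule of a localization of `R` is
multiplication by a fraction, so `f x • y = f y • x`. Given `m = π p₀`, the endomorphism
`p ↦ f m • p - f (π p) • p₀` of `P` therefore lands in `ker π = K` and restricts to `f m • id_K`.
Conversely, if `g ∘ ι = r • id_K`, then `r • id - ι ∘ g` factors through `π`, so `r • id_M`
factors through the projective module `P`. A dual basis of `P` then writes `r • e` as
`∑ cᵢ e • mᵢ = (∑ cᵢ mᵢ) • e` for a regular element `e ∈ M`, and cancelling `e` puts `r` in the
trace ideal.
-/

open CategoryTheory Opposite

universe u

/-- The trace ideal of an `R`-module `M`: the ideal of `R` generated by the images of all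
`R`-linear maps `M → R`. -/
noncomputable def traceIdeal (R : Type u) [CommRing R] (M : Type u)
    [AddCommGroup M] [Module R M] : Ideal R :=
  ⨆ f : M →ₗ[R] R, LinearMap.range f

namespace Submodule

variable {R A : Type*} [CommRing R] [CommRing A] [Algebra R A]

theorem dual_apply_smul_comm (S : Submonoid R) [IsLocalization S A] {M : Submodule R A}
    (f : M →ₗ[R] R) (x y : M) : f x • y = f y • x := by
  obtain ⟨⟨a, s⟩, hx⟩ := IsLocalization.surj S (x : A)
  obtain ⟨⟨b, t⟩, hy⟩ := IsLocalization.surj S (y : A)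
  -- `x = a / s` and `y = b / t`, so both sides equal `a * b`.
  have hab : (a * t) • y = (b * s) • x := by
    ext
    simp only [coe_smul, Algebra.smul_def, map_mul] at hx hy ⊢
    linear_combination (algebraMap R A a) * hy - (algebraMap R A b) * hx
  have hfab := congrArg (algebraMap R A) (congrArg f hab)
  ext
  apply (IsLocalization.map_units A (s * t)).mul_left_cancel
  simp only [map_smul, smul_eq_mul, coe_smul, Algebra.smul_def, Submonoid.coe_mul, map_mul]
    at hfab hx hy ⊢
  linear_combination (algebraMap R A s * algebraMap R A (f x)) * hy
    - (algebraMap R A t * algebraMap R A (f y)) * hx - hfab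

theorem smul_left_injective_of_algebraMap_mem {S : Submonoid R} [IsLocalization S A]
    (hS : S ≤ nonZeroDivisors R) {M : Submodule R A} {e : R} (he : e ∈ S)
    (heM : algebraMap R A e ∈ M) : Function.Injective (· • (⟨_, heM⟩ : M) : R → M) := by
  intro r t hrt
  have h := congrArg Subtype.val hrt
  simp only [coe_smul, Algebra.smul_def] at h
  exact IsLocalization.injective A hS
    ((IsLocalization.map_units A (⟨e, he⟩ : S)).mul_right_cancel h)

end Submodule

namespace LinearMap

variable {R : Type*} [CommRing R] {K P X₁ X₂ : Type*} [AddCommGroup K] [Module R K]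
  [AddCommGroup P] [Module R P] [AddCommGroup X₁] [Module R X₁] [AddCommGroup X₂] [Module R X₂]

/-- The ideal of those `r` for which `r • id_K` extends along `ι`. -/
def extensionIdeal (ι : K →ₗ[R] P) : Ideal R :=
  (range (lcomp R K ι)).colon {LinearMap.id}

theorem mem_extensionIdeal {ι : K →ₗ[R] P} {r : R} :
    r ∈ extensionIdeal ι ↔ ∃ g : P →ₗ[R] K, g ∘ₗ ι = r • LinearMap.id := by
  simp [extensionIdeal, Submodule.mem_colon_singleton, lcomp_apply']

theorem exists_comp_eq_of_range_le {ι : K →ₗ[R] P} (hι : Function.Injective ι)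
    {φ : X₁ →ₗ[R] P} (hφ : range φ ≤ range ι) : ∃ g : X₁ →ₗ[R] K, ι ∘ₗ g = φ :=
  ⟨(LinearEquiv.ofInjective ι hι).symm ∘ₗ φ.codRestrict _ fun x ↦ hφ ⟨x, rfl⟩, by
    ext x
    simp⟩

theorem exists_comp_eq_of_ker_le {δ : X₁ →ₗ[R] K} (hδ : Function.Surjective δ)
    {u : X₁ →ₗ[R] P} (hu : ker δ ≤ ker u) : ∃ v : K →ₗ[R] P, v ∘ₗ δ = u :=
  ⟨(ker δ).liftQ u hu ∘ₗ (δ.quotKerEquivOfSurjective hδ).symm, by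
    ext x
    simp⟩

theorem mem_extensionIdeal_iff_forall_comp_eq_zero (ι : K →ₗ[R] P) {δ : X₁ →ₗ[R] K}
    (hδ : Function.Surjective δ) {d : X₂ →ₗ[R] X₁} (hd : Function.Exact d δ) {r : R} :
    r ∈ extensionIdeal ι ↔
      ∀ u : X₁ →ₗ[R] K, u ∘ₗ d = 0 → ∃ v : P →ₗ[R] K, v ∘ₗ ι ∘ₗ δ = r • u := by
  constructor
  · intro hr u hu
    obtain ⟨g, hg⟩ := mem_extensionIdeal.1 hr
    have hker : ker δ ≤ ker u := by
      rw [hd.linearMap_ker_eq]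
      rintro _ ⟨x, rfl⟩
      exact LinearMap.congr_fun hu x
    obtain ⟨w, rfl⟩ := exists_comp_eq_of_ker_le hδ hker
    refine ⟨w ∘ₗ g, ?_⟩
    rw [comp_assoc, ← comp_assoc δ ι g, hg]
    ext
    simp
  · intro h
    obtain ⟨v, hv⟩ := h δ hd.linearMap_comp_eq_zero
    refine mem_extensionIdeal.2 ⟨v, LinearMap.ext fun k ↦ ?_⟩
    obtain ⟨x, rfl⟩ := hδ k
    exact LinearMap.congr_fun hv x

end LinearMap

open LinearMap

section TraceIdeal

variable {R : Type u} [CommRing R] {N K P : Type u} [AddCommGroup N] [Module R N]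
  [AddCommGroup K] [Module R K] [AddCommGroup P] [Module R P]
  {ι : K →ₗ[R] P} {π : P →ₗ[R] N}

theorem traceIdeal_le_extensionIdeal (hcomm : ∀ (f : N →ₗ[R] R) (x y : N), f x • y = f y • x)
    (hι : Function.Injective ι) (hexact : Function.Exact ι π) (hπ : Function.Surjective π) :
    traceIdeal R N ≤ extensionIdeal ι := by
  refine iSup_le fun f ↦ ?_
  rintro _ ⟨m, rfl⟩
  obtain ⟨p₀, rfl⟩ := hπ m
  let φ : P →ₗ[R] P := f (π p₀) • LinearMap.id - (f ∘ₗ π).smulRight p₀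
  have hφ : range φ ≤ range ι := by
    rintro _ ⟨p, rfl⟩
    rw [← hexact.linearMap_ker_eq, mem_ker]
    simp [φ, hcomm f (π p₀) (π p)]
  obtain ⟨g, hg⟩ := exists_comp_eq_of_range_le hι hφ
  refine mem_extensionIdeal.2 ⟨g, LinearMap.ext fun k ↦ hι ?_⟩
  calc ι (g (ι k)) = φ (ι k) := LinearMap.congr_fun hg (ι k)
    _ = _ := by simp [φ, hexact.apply_apply_eq_zero]

theorem exists_mem_traceIdeal_smul_eq [Module.Projective R P]
    (hcomm : ∀ (f : N →ₗ[R] R) (x y : N), f x • y = f y • x) {ψ : N →ₗ[R] P} {r : R}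
    (hψ : π ∘ₗ ψ = r • LinearMap.id) (n : N) : ∃ t ∈ traceIdeal R N, r • n = t • n := by
  obtain ⟨s, hs⟩ := Module.projective_def'.1 ‹_›
  let c : P → N →ₗ[R] R := fun q ↦ Finsupp.lapply q ∘ₗ s ∘ₗ ψ
  refine ⟨∑ q ∈ (s (ψ n)).support, c q (π q), sum_mem fun q _ ↦ ?_, ?_⟩
  · exact le_iSup (fun f : N →ₗ[R] R ↦ range f) (c q) ⟨π q, rfl⟩
  · have hψn : ψ n = ∑ q ∈ (s (ψ n)).support, c q n • q := by
      simpa [Finsupp.linearCombination_apply, Finsupp.sum, c] using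
        (LinearMap.congr_fun hs (ψ n)).symm
    calc r • n = π (ψ n) := (LinearMap.congr_fun hψ n).symm
      _ = ∑ q ∈ (s (ψ n)).support, c q n • π q := by
        conv_lhs => rw [hψn]
        simp only [map_sum, map_smul]
      _ = _ := by simp [hcomm _ n, Finset.sum_smul]

theorem extensionIdeal_le_traceIdeal [Module.Projective R P]
    (hcomm : ∀ (f : N →ₗ[R] R) (x y : N), f x • y = f y • x) {n₀ : N}
    (hn₀ : Function.Injective (· • n₀ : R → N)) (hexact : Function.Exact ι π)
    (hπ : Function.Surjective π) : extensionIdeal ι ≤ traceIdeal R N := by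
  intro r hr
  obtain ⟨g, hg⟩ := mem_extensionIdeal.1 hr
  let φ : P →ₗ[R] P := r • LinearMap.id - ι ∘ₗ g
  have hker : ker π ≤ ker φ := by
    rintro _ hp
    obtain ⟨k, rfl⟩ := hexact.linearMap_ker_eq ▸ hp
    have hgk : g (ι k) = r • k := by simpa using LinearMap.congr_fun hg k
    simp [φ, hgk]
  obtain ⟨ψ, hψ⟩ := exists_comp_eq_of_ker_le hπ hker
  have hπψ : π ∘ₗ ψ = r • LinearMap.id := by
    refine LinearMap.ext fun m ↦ ?_
    obtain ⟨p, rfl⟩ := hπ m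
    calc π (ψ (π p)) = π (φ p) := congr_arg π (LinearMap.congr_fun hψ p)
      _ = _ := by simp [φ, hexact.apply_apply_eq_zero]
  obtain ⟨t, ht, hrt⟩ := exists_mem_traceIdeal_smul_eq hcomm hπψ n₀
  exact hn₀ hrt ▸ ht

end TraceIdeal

namespace CategoryTheory

open Limits Projective

lemma Projective.d_comp {C : Type*} [Category* C] [Abelian C] [EnoughProjectives C] {Y Z : C}
    (f : Y ⟶ Z) : d f ≫ f = 0 :=
  (Category.assoc (Projective.π (kernel f)) (kernel.ι f) f).trans
    (by rw [kernel.condition, Limits.comp_zero]; rfl)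

variable {R : Type u} [CommRing R]

namespace ProjectiveResolution

variable {X Z : ModuleCat.{u} R} (p : X ⟶ Z)

/-- `ProjectiveResolution.ofComplex Z` with its first term `Projective.over Z` replaced by `X`. -/
noncomputable def ofEpiComplex : ChainComplex (ModuleCat.{u} R) ℕ :=
  ChainComplex.mk' X (syzygies p) (d p) fun f ↦ ⟨_, d f, d_comp f⟩

lemma ofEpiComplex_d_1_0 : (ofEpiComplex p).d 1 0 = d p := by
  simp [ofEpiComplex]

lemma ofEpiComplex_exactAt_succ (n : ℕ) : (ofEpiComplex p).ExactAt (n + 1) := by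
  rw [HomologicalComplex.exactAt_iff' _ (n + 1 + 1) (n + 1) n (by simp) (by simp)]
  dsimp [ofEpiComplex, HomologicalComplex.sc', HomologicalComplex.shortComplexFunctor',
    ChainComplex.mk', ChainComplex.mk]
  match n with
  | 0 => apply exact_d_f
  | n + 1 =>
    simp only [ChainComplex.of.d, dif_pos, eqToHom_refl]
    apply exact_d_f

variable [Projective X] [Epi p]

instance (n : ℕ) : Projective ((ofEpiComplex p).X n) := by
  obtain (_ | _ | _ | n) := n
  · assumption
  all_goals apply Projective.projective_over

noncomputable def ofEpi : ProjectiveResolution Z where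
  complex := ofEpiComplex p
  π := (ChainComplex.toSingle₀Equiv _ _).symm ⟨p, by rw [ofEpiComplex_d_1_0]; exact d_comp p⟩
  quasiIso := ⟨fun n ↦ by
    cases n
    · rw [ChainComplex.quasiIsoAt₀_iff, ShortComplex.quasiIso_iff_of_zeros']
      · refine (ShortComplex.exact_and_epi_g_iff_of_iso ?_).2 ⟨exact_d_f p, inferInstance⟩
        exact ShortComplex.isoMk (Iso.refl _) (Iso.refl _) (Iso.refl _)
          (by simp [ofEpiComplex]; rfl) (by simp; rfl)
      all_goals rfl
    · rw [quasiIsoAt_iff_exactAt']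
      · apply ofEpiComplex_exactAt_succ
      · apply ChainComplex.exactAt_succ_single_obj⟩

end ProjectiveResolution

theorem ShortComplex.mem_annihilator_homology_iff (S : ShortComplex (ModuleCat.{u} R)) {r : R} :
    r ∈ Module.annihilator R S.homology ↔ ∀ x : S.X₂, S.g x = 0 → ∃ y : S.X₁, S.f y = r • x := by
  rw [S.moduleCatHomologyIso.toLinearEquiv.annihilator_eq]
  change r ∈ Module.annihilator R (ker S.g.hom ⧸ range S.moduleCatToCycles) ↔ _
  rw [Submodule.annihilator_quotient, Submodule.mem_colon]
  simp only [Set.mem_univ, forall_true_left, mem_range, Subtype.forall, mem_ker, Subtype.ext_iff]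
  rfl

theorem ProjectiveResolution.mem_annihilator_Ext_one_iff {X : ModuleCat.{u} R}
    (Pr : ProjectiveResolution X) (Y : ModuleCat.{u} R) {r : R} :
    r ∈ Module.annihilator R (((Ext R (ModuleCat.{u} R) 1).obj (op X)).obj Y) ↔
      ∀ u : Pr.complex.X 1 →ₗ[R] Y, u ∘ₗ (Pr.complex.d 2 1).hom = 0 →
        ∃ v : Pr.complex.X 0 →ₗ[R] Y, v ∘ₗ (Pr.complex.d 1 0).hom = r • u := by
  rw [(Pr.isoExt 1 Y ≪≫ (Pr.complex.linearYonedaObj R Y).homologyIsoSc' 0 1 2 (by simp)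
    (by simp)).toLinearEquiv.annihilator_eq, ShortComplex.mem_annihilator_homology_iff]
  refine (ModuleCat.homLinearEquiv (S := R)).toEquiv.forall_congr fun {u} ↦ ?_
  refine imp_congr (ModuleCat.hom_ext_iff.trans ?_) ?_
  · rfl
  · exact (ModuleCat.homLinearEquiv (S := R)).toEquiv.exists_congr fun {v} ↦
      ModuleCat.hom_ext_iff

end CategoryTheory

theorem annihilator_Ext_one_eq_extensionIdeal {R : Type u} [CommRing R] {N K P : Type u}
    [AddCommGroup N] [Module R N] [AddCommGroup K] [Module R K] [AddCommGroup P] [Module R P]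
    [Module.Projective R P] {ι : K →ₗ[R] P} {π : P →ₗ[R] N} (hι : Function.Injective ι)
    (hexact : Function.Exact ι π) (hπ : Function.Surjective π) :
    Module.annihilator R
        (((Ext R (ModuleCat.{u} R) 1).obj (op (ModuleCat.of R N))).obj (ModuleCat.of R K)) =
      extensionIdeal ι := by
  have : Projective (ModuleCat.of R P) := (IsProjective.iff_projective P).1 inferInstance
  let p := ModuleCat.ofHom π
  have : Epi p := (ModuleCat.epi_iff_surjective _).2 hπ
  let Pr := ProjectiveResolution.ofEpi p
  have hrange : range (Pr.complex.d 1 0).hom = range ι := by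
    have h : range (Projective.d p).hom = ker p.hom := (exact_d_f p).moduleCat_range_eq_ker
    rw [← ProjectiveResolution.ofEpiComplex_d_1_0] at h
    exact h.trans hexact.linearMap_ker_eq
  -- `d₁₀ = ι ∘ δ` with `δ` onto `K` and, as `ι` is injective, with kernel the image of `d₂₁`.
  obtain ⟨δ, hδ⟩ := exists_comp_eq_of_range_le hι hrange.le
  have hδsurj : Function.Surjective δ := by
    intro k
    obtain ⟨x, hx⟩ := hrange.ge ⟨k, rfl⟩
    exact ⟨x, hι ((LinearMap.congr_fun hδ x).trans hx)⟩
  have hexδ : Function.Exact (Pr.complex.d 2 1).hom δ := by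
    rw [LinearMap.exact_iff, ← ker_comp_of_ker_eq_bot δ (ker_eq_bot_of_injective hι), hδ]
    exact ((Pr.exact_succ 0).moduleCat_range_eq_ker).symm
  ext r
  rw [Pr.mem_annihilator_Ext_one_iff, ← hδ,
    mem_extensionIdeal_iff_forall_comp_eq_zero ι hδsurj hexδ]
  rfl

theorem trace_eq_ann_ext_one_syzygy_general (R : Type u) [CommRing R]
    (M : Submodule R (Localization (nonZeroDivisors R)))
    (hreg : ∃ r ∈ nonZeroDivisors R,
      algebraMap R (Localization (nonZeroDivisors R)) r ∈ M)
    (K P : Type u) [AddCommGroup K] [Module R K] [AddCommGroup P] [Module R P]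
    [Module.Projective R P]
    (ι : K →ₗ[R] P) (π : P →ₗ[R] ↥M)
    (hι : Function.Injective ι) (hexact : Function.Exact ι π)
    (hπ : Function.Surjective π) :
    traceIdeal R ↥M =
      Module.annihilator R
        (((Ext R (ModuleCat.{u} R) 1).obj (op (ModuleCat.of R ↥M))).obj
          (ModuleCat.of R K)) := by
  obtain ⟨e, he, heM⟩ := hreg
  have hcomm := Submodule.dual_apply_smul_comm (nonZeroDivisors R) (M := M)
  rw [annihilator_Ext_one_eq_extensionIdeal hι hexact hπ]
  exact le_antisymm (traceIdeal_le_extensionIdeal hcomm hι hexact hπ)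
    (extensionIdeal_le_traceIdeal hcomm
      (Submodule.smul_left_injective_of_algebraMap_mem le_rfl he heM) hexact hπ)

/-- Let `R` be a commutative Noetherian ring and `M` a finitely generated `R`-submodule of the
total ring of fractions `Q(R)` containing the image of a non-zero-divisor of `R`.  Then for every
short exact sequence `0 → K → P → M → 0` with `P` finitely generated projective, the trace ideal
of `M` equals the annihilator of `Ext¹_R(M, K)`. -/
theorem trace_eq_ann_ext_one_syzygy (R : Type u) [CommRing R] [IsNoetherianRing R]
    (M : Submodule R (Localization (nonZeroDivisors R)))
    (hfg : M.FG)
    (hreg : ∃ r ∈ nonZeroDivisors R,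
      algebraMap R (Localization (nonZeroDivisors R)) r ∈ M)
    (K P : Type u) [AddCommGroup K] [Module R K] [AddCommGroup P] [Module R P]
    [Module.Finite R P] [Module.Projective R P]
    (ι : K →ₗ[R] P) (π : P →ₗ[R] ↥M)
    (hι : Function.Injective ι) (hexact : Function.Exact ι π)
    (hπ : Function.Surjective π) :
    traceIdeal R ↥M =
      Module.annihilator R
        (((Ext R (ModuleCat.{u} R) 1).obj (op (ModuleCat.of R ↥M))).obj
          (ModuleCat.of R K)) :=
  trace_eq_ann_ext_one_syzygy_general R M hreg K P ι π hι hexact hπ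
end

section
/- Let R be a commutative Noetherian ring and let M be a finitely generated R-submodule of the total ring of fractions Q(R) containing the image of a non-zero-divisor of R. Then the trace ideal Tr_R(M) equals the set of all x ∈ R such that the multiplication map x·id_M : M → M factors through some finitely generated free R-module (i.e., x·id_M = f ∘ g for some R-linear maps g : M → R^n and f : R^n → M). -/
/-!
Every element of `M ⊆ Q(R)` is a fraction, and clearing denominators shows that any
`φ : M → R` satisfies `φ m • m' = φ m' • m`. Hence for functionals `φ i` and elements `m i`
the endomorphism `v ↦ ∑ i, φ i v • m i` of `M` is multiplication by `∑ i, φ i (m i) ∈ Tr(M)`.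
Writing `x • id_M = f ∘ g` with `g : M → Rⁿ` amounts to such a sum, and `M` is a faithful
`R`-module since it contains a non-zero-divisor, so `x • id_M` has this form exactly when
`x = ∑ i, φ i (m i)`.
-/

universe u

variable {R : Type u} [CommRing R]

section Module

variable {M : Type u} [AddCommGroup M] [Module R M] {x : R}

theorem mem_traceIdeal_iff :
    x ∈ traceIdeal R M ↔
      ∃ (n : ℕ) (φ : Fin n → Module.Dual R M) (m : Fin n → M), ∑ i, φ i (m i) = x := by
  constructor
  · intro hx
    rw [traceIdeal, Submodule.iSup_eq_span, Submodule.mem_span_set'] at hx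
    obtain ⟨n, c, y, rfl⟩ := hx
    have hy : ∀ i, ∃ (φ : Module.Dual R M) (m : M), φ m = y i := fun i => by
      simpa only [Set.mem_iUnion, SetLike.mem_coe, LinearMap.mem_range] using (y i).2
    choose φ m hφm using hy
    exact ⟨n, φ, fun i => c i • m i, by simp [hφm]⟩
  · rintro ⟨n, φ, m, rfl⟩
    exact Submodule.sum_mem _ fun i _ =>
      Submodule.mem_iSup_of_mem (φ i) (LinearMap.mem_range_self (φ i) (m i))

theorem exists_comp_eq_smul_id_iff :
    (∃ (n : ℕ) (g : M →ₗ[R] (Fin n → R)) (f : (Fin n → R) →ₗ[R] M),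
        f ∘ₗ g = x • LinearMap.id) ↔
      ∃ (n : ℕ) (φ : Fin n → Module.Dual R M) (m : Fin n → M),
        ∀ v, ∑ i, φ i v • m i = x • v := by
  constructor
  · rintro ⟨n, g, f, hfg⟩
    refine ⟨n, fun i => LinearMap.proj i ∘ₗ g, fun i => f (Pi.single i 1), fun v => ?_⟩
    have hv := LinearMap.congr_fun hfg v
    rw [LinearMap.comp_apply, LinearMap.pi_apply_eq_sum_univ f] at hv
    have hsingle (i : Fin n) : (fun j => if i = j then (1 : R) else 0) = Pi.single i 1 := by
      ext j
      simp [Pi.single_apply, eq_comm]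
    simp only [hsingle] at hv
    exact hv
  · rintro ⟨n, φ, m, h⟩
    exact ⟨n, LinearMap.pi φ, Fintype.linearCombination R m,
      LinearMap.ext fun v => by simpa [Fintype.linearCombination_apply] using h v⟩

end Module

section Localization

variable {K : Type u} [CommRing K] [Algebra R K] {M : Submodule R K}

theorem Submodule.dual_apply_smul_comm_s4 (S : Submonoid R) [IsLocalization S K]
    (φ : Module.Dual R M) (m m' : M) :
    φ m • m' = φ m' • m := by
  obtain ⟨⟨a, s⟩, hm⟩ := IsLocalization.surj S (m : K)
  obtain ⟨⟨a', s'⟩, hm'⟩ := IsLocalization.surj S (m' : K)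
  have hφ : (s' : R) * (a * φ m') = s * (a' * φ m) := by
    -- both sides are `a * a'` in `K`
    have hsm : (s' : R) • a • m' = (s : R) • a' • m := by
      ext
      simp only [Submodule.coe_smul, Algebra.smul_def] at hm hm' ⊢
      linear_combination algebraMap R K a * hm' - algebraMap R K a' * hm
    simpa using congrArg φ hsm
  ext
  apply (IsLocalization.map_units K (s * s')).mul_left_cancel
  have hφK := congrArg (algebraMap R K) hφ
  simp only [Submodule.coe_smul, Algebra.smul_def, Submonoid.coe_mul, map_mul] at hm hm' hφK ⊢
  linear_combination algebraMap R K s * algebraMap R K (φ m) * hm' -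
    algebraMap R K s' * algebraMap R K (φ m') * hm - hφK

theorem Submodule.sum_dual_apply_smul (S : Submonoid R) [IsLocalization S K] {n : ℕ}
    (φ : Fin n → Module.Dual R M) (m : Fin n → M) (v : M) :
    ∑ i, φ i v • m i = (∑ i, φ i (m i)) • v := by
  simp_rw [Finset.sum_smul, M.dual_apply_smul_comm_s4 S]

theorem Submodule.faithfulSMul_of_algebraMap_mem [IsFractionRing R K] {r : R}
    (hr : r ∈ nonZeroDivisors R) (hrM : algebraMap R K r ∈ M) : FaithfulSMul R M := by
  refine ⟨fun {a b} h => ?_⟩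
  have hab := congrArg Subtype.val (h ⟨_, hrM⟩)
  simp only [Submodule.coe_smul, Algebra.smul_def, ← map_mul] at hab
  exact (mul_cancel_right_mem_nonZeroDivisors hr).mp (IsFractionRing.injective R K hab)

end Localization

theorem trace_eq_factoring_set_general (R : Type u) [CommRing R]
    (M : Submodule R (Localization (nonZeroDivisors R)))
    (hreg : ∃ r ∈ nonZeroDivisors R,
      algebraMap R (Localization (nonZeroDivisors R)) r ∈ M) :
    ∀ x : R, x ∈ traceIdeal R ↥M ↔
      ∃ (n : ℕ) (g : ↥M →ₗ[R] (Fin n → R)) (f : (Fin n → R) →ₗ[R] ↥M),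
        f ∘ₗ g = x • (LinearMap.id : ↥M →ₗ[R] ↥M) := by
  obtain ⟨r, hr, hrM⟩ := hreg
  have := M.faithfulSMul_of_algebraMap_mem hr hrM
  intro x
  rw [mem_traceIdeal_iff, exists_comp_eq_smul_id_iff]
  refine exists₃_congr fun n φ m => ?_
  simp_rw [M.sum_dual_apply_smul (nonZeroDivisors R)]
  exact ⟨fun h v => h ▸ rfl, eq_of_smul_eq_smul⟩

/-- Let `R` be a commutative Noetherian ring and `M` a finitely generated `R`-submodule of the
total ring of fractions `Q(R)` containing the image of a non-zero-divisor of `R`.  Then the trace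
ideal of `M` consists exactly of those `x ∈ R` for which multiplication by `x` on `M` factors
through a finitely generated free `R`-module. -/
theorem trace_eq_factoring_set (R : Type u) [CommRing R] [IsNoetherianRing R]
    (M : Submodule R (Localization (nonZeroDivisors R)))
    (hfg : M.FG)
    (hreg : ∃ r ∈ nonZeroDivisors R,
      algebraMap R (Localization (nonZeroDivisors R)) r ∈ M) :
    ∀ x : R, x ∈ traceIdeal R ↥M ↔
      ∃ (n : ℕ) (g : ↥M →ₗ[R] (Fin n → R)) (f : (Fin n → R) →ₗ[R] ↥M),
        f ∘ₗ g = x • (LinearMap.id : ↥M →ₗ[R] ↥M) :=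
  trace_eq_factoring_set_general R M hreg
end

section
/- Let R be a commutative Noetherian ring and M a finitely generated R-module. Then the set {x ∈ R : the multiplication map x·id_M : M → M factors through some finitely generated free R-module} equals the intersection, taken over all integers i ≥ 1 and all (not necessarily finitely generated) R-modules N, of the annihilators ann_R Ext^i_R(M, N). -/
/-!
If `x • id_M = f ∘ g` through a free module `F`, lifting `f` and `g` to a projective resolution
`P` of `M` (and `F` to itself) gives a chain map homotopic to `x • id_P` that vanishes in
positive degrees, since `F` is its own resolution; so `x` kills every cocycle class, i.e. every
`Ext^i(M, -)` with `i ≥ 1`.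

Conversely, let `K = ker (P₀ → M)`. The map `P₁ → K` is a `1`-cocycle; if `x` times it is the
coboundary of `ψ : P₀ → K`, then `x • id - ψ` vanishes on the image of `P₁` and so descends to
`s : M → P₀` with `π ∘ s = x • id_M`. Finally, since `M` is finitely generated, `π` lifts along a
surjection `Rⁿ → M`, by projectivity of `P₀`.
-/

open CategoryTheory Opposite Limits

universe u v w

lemma CategoryTheory.ShortComplex.mem_annihilator_moduleCat_homology_iff {R : Type u} [CommRing R]
    (S : ShortComplex (ModuleCat.{v} R)) (x : R) :
    x ∈ Module.annihilator R S.homology ↔ ∀ φ : S.X₂, S.g φ = 0 → ∃ ψ : S.X₁, S.f ψ = x • φ := by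
  rw [S.moduleCatHomologyIso.toLinearEquiv.annihilator_eq, Module.mem_annihilator]
  change (∀ h : LinearMap.ker S.g.hom ⧸ LinearMap.range S.moduleCatToCycles, x • h = 0) ↔ _
  rw [(Submodule.mkQ_surjective _).forall, Subtype.forall]
  refine forall₂_congr fun φ hφ ↦ ?_
  rw [Submodule.mkQ_apply, ← Submodule.Quotient.mk_smul, Submodule.Quotient.mk_eq_zero,
    LinearMap.mem_range]
  simp only [Subtype.ext_iff]
  rfl

section Ext

variable {R : Type u} [CommRing R] {C : Type v} [Category.{w} C] [Abelian C] [Linear R C]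

lemma CategoryTheory.ShortComplex.Exact.exists_comp_g_eq_smul_id {S : ShortComplex C}
    (hS : S.Exact) [Epi S.g] {x : R} {ψ : S.X₂ ⟶ kernel S.g}
    (hψ : S.f ≫ ψ = x • kernel.lift S.g S.f S.zero) :
    ∃ s : S.X₃ ⟶ S.X₂, s ≫ S.g = x • 𝟙 S.X₃ := by
  have hd : S.f ≫ (x • 𝟙 S.X₂ - ψ ≫ kernel.ι S.g) = 0 := by
    rw [Preadditive.comp_sub, ← Category.assoc, hψ]
    simp [Linear.smul_comp]
  refine ⟨hS.desc _ hd, (cancel_epi S.g).1 ?_⟩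
  simp [Preadditive.sub_comp, Linear.smul_comp, Linear.comp_smul]

namespace CategoryTheory.ProjectiveResolution

variable {X : C} (P : ProjectiveResolution X)

lemma mem_annihilator_ext_succ_iff [EnoughProjectives C] (Y : C) (j : ℕ) (x : R) :
    x ∈ Module.annihilator R (((Ext R C (j + 1)).obj (op X)).obj Y) ↔
      ∀ φ : P.complex.X (j + 1) ⟶ Y, P.complex.d (j + 2) (j + 1) ≫ φ = 0 →
        ∃ ψ : P.complex.X j ⟶ Y, P.complex.d (j + 1) j ≫ ψ = x • φ := by
  rw [(P.isoExt (j + 1) Y ≪≫ (P.complex.linearYonedaObj R Y).homologyIsoSc' j (j + 1) (j + 2)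
      (by simp) (by simp)).toLinearEquiv.annihilator_eq,
    ShortComplex.mem_annihilator_moduleCat_homology_iff]
  rfl

lemma smul_id_comp_π (x : R) :
    (x • 𝟙 P.complex) ≫ P.π = P.π ≫ (ChainComplex.single₀ C).map (x • 𝟙 X) := by
  ext
  simp only [HomologicalComplex.comp_f, HomologicalComplex.smul_f_apply,
    ChainComplex.single₀_map_f_zero, Linear.smul_comp, Category.id_comp]
  -- `Linear.comp_smul` does not fire because the target of `P.π.f 0` is only defeq to `X`
  exact ((Linear.comp_smul _ _ _ (P.π.f 0) x (𝟙 _)).trans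
    (congrArg (x • ·) (Category.comp_id _))).symm

noncomputable def smulIdHomotopyLiftComp {F : C} [Projective F] (f : X ⟶ F) (g : F ⟶ X) (x : R)
    (hfg : f ≫ g = x • 𝟙 X) :
    Homotopy (x • 𝟙 P.complex) (P.lift f (self F) ≫ (self F).lift g P) :=
  liftHomotopy (x • 𝟙 X) _ _ (P.smul_id_comp_π x) (by
    rw [Category.assoc, lift_commutes, ← Category.assoc, lift_commutes, Category.assoc,
      ← Functor.map_comp, hfg])

lemma exists_d_comp_eq_smul_of_homotopy {x : R} {e : P.complex ⟶ P.complex}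
    (H : Homotopy (x • 𝟙 P.complex) e) {j : ℕ} (he : e.f (j + 1) = 0) {Y : C}
    (φ : P.complex.X (j + 1) ⟶ Y) (hφ : P.complex.d (j + 2) (j + 1) ≫ φ = 0) :
    ∃ ψ : P.complex.X j ⟶ Y, P.complex.d (j + 1) j ≫ ψ = x • φ := by
  refine ⟨H.hom j (j + 1) ≫ φ, ?_⟩
  have hcomm := H.comm (j + 1)
  rw [he, dNext_eq H.hom (show (ComplexShape.down ℕ).Rel (j + 1) j by simp),
    prevD_eq H.hom (show (ComplexShape.down ℕ).Rel (j + 2) (j + 1) by simp), add_zero] at hcomm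
  have hxφ : x • φ = (x • 𝟙 P.complex).f (j + 1) ≫ φ := by simp [Linear.smul_comp]
  rw [hxφ, hcomm, Preadditive.add_comp, Category.assoc, Category.assoc, hφ, comp_zero, add_zero]

lemma exists_comp_π_eq_smul_id [EnoughProjectives C] {x : R}
    (hx : x ∈ Module.annihilator R (((Ext R C 1).obj (op X)).obj (kernel (P.π.f 0)))) :
    ∃ s : X ⟶ P.complex.X 0, s ≫ P.π.f 0 = x • 𝟙 X := by
  obtain ⟨ψ, hψ⟩ := (P.mem_annihilator_ext_succ_iff _ 0 x).mp hx
    (kernel.lift (P.π.f 0) (P.complex.d 1 0) P.complex_d_comp_π_f_zero)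
    (by rw [← cancel_mono (kernel.ι _), Category.assoc, kernel.lift_ι, P.complex.d_comp_d,
      zero_comp])
  exact P.exact₀.exists_comp_g_eq_smul_id hψ

end CategoryTheory.ProjectiveResolution

lemma CategoryTheory.mem_annihilator_ext_succ_of_comp_eq_smul_id [EnoughProjectives C] {X F : C}
    [Projective F] (f : X ⟶ F) (g : F ⟶ X) {x : R} (hfg : f ≫ g = x • 𝟙 X) (Y : C) (j : ℕ) :
    x ∈ Module.annihilator R (((Ext R C (j + 1)).obj (op X)).obj Y) := by
  obtain ⟨P⟩ := HasProjectiveResolution.out (Z := X)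
  rw [P.mem_annihilator_ext_succ_iff]
  have hF : IsZero ((ProjectiveResolution.self F).complex.X (j + 1)) :=
    HomologicalComplex.isZero_single_obj_X _ 0 F (j + 1) (by simp)
  refine fun φ hφ ↦
    P.exists_d_comp_eq_smul_of_homotopy (P.smulIdHomotopyLiftComp f g x hfg) ?_ φ hφ
  rw [HomologicalComplex.comp_f, hF.eq_of_tgt ((P.lift f _).f (j + 1)) 0, zero_comp]

end Ext

theorem LinearMap.exists_fin_comp_eq_comp_of_projective {R M Q : Type*} [Semiring R]
    [AddCommMonoid M] [Module R M] [Module.Finite R M] [AddCommMonoid Q] [Module R Q]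
    [Module.Projective R Q] (g : M →ₗ[R] Q) (f : Q →ₗ[R] M) :
    ∃ (n : ℕ) (g' : M →ₗ[R] (Fin n → R)) (f' : (Fin n → R) →ₗ[R] M), f' ∘ₗ g' = f ∘ₗ g := by
  obtain ⟨n, p, hp⟩ := Module.Finite.exists_fin' R M
  obtain ⟨h, hh⟩ := Module.projective_lifting_property p f hp
  exact ⟨n, h ∘ₗ g, p, by rw [← LinearMap.comp_assoc, hh]⟩

theorem factoring_set_eq_iInf_ann_ext_general (R : Type u) [CommRing R]
    (M : Type u) [AddCommGroup M] [Module R M] [Module.Finite R M] :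
    ∀ x : R,
      (∃ (n : ℕ) (g : M →ₗ[R] (Fin n → R)) (f : (Fin n → R) →ₗ[R] M),
        f ∘ₗ g = x • (LinearMap.id : M →ₗ[R] M)) ↔
      x ∈ ⨅ (i : ℕ) (_ : 1 ≤ i) (N : ModuleCat.{u} R),
        Module.annihilator R
          (((Ext R (ModuleCat.{u} R) i).obj (op (ModuleCat.of R M))).obj N) := by
  intro x
  simp only [Submodule.mem_iInf]
  constructor
  · rintro ⟨n, g, f, hfg⟩ i hi N
    obtain ⟨j, rfl⟩ := Nat.exists_eq_add_of_le' hi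
    have : Projective (ModuleCat.of R (Fin n → R)) :=
      ModuleCat.projective_of_free (Pi.basisFun R (Fin n))
    exact mem_annihilator_ext_succ_of_comp_eq_smul_id (ModuleCat.ofHom g) (ModuleCat.ofHom f)
      (ModuleCat.hom_ext hfg) N j
  · intro hx
    obtain ⟨P⟩ := HasProjectiveResolution.out (Z := ModuleCat.of R M)
    obtain ⟨s, hs⟩ := P.exists_comp_π_eq_smul_id (hx 1 le_rfl _)
    have := (IsProjective.iff_projective (P.complex.X 0)).mpr (P.projective 0)
    obtain ⟨n, g, f, hfg⟩ :=
      LinearMap.exists_fin_comp_eq_comp_of_projective s.hom (P.π.f 0).hom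
    exact ⟨n, g, f, hfg.trans (congrArg ModuleCat.Hom.hom hs)⟩

/-- Let `R` be a commutative Noetherian ring and `M` a finitely generated `R`-module.  Then an
element `x ∈ R` is such that multiplication by `x` on `M` factors through a finitely generated
free `R`-module if and only if `x` lies in the intersection, over all `i ≥ 1` and all `R`-modules
`N`, of the annihilators of `Ext^i_R(M, N)`. -/
theorem factoring_set_eq_iInf_ann_ext (R : Type u) [CommRing R] [IsNoetherianRing R]
    (M : Type u) [AddCommGroup M] [Module R M] [Module.Finite R M] :
    ∀ x : R,
      (∃ (n : ℕ) (g : M →ₗ[R] (Fin n → R)) (f : (Fin n → R) →ₗ[R] M),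
        f ∘ₗ g = x • (LinearMap.id : M →ₗ[R] M)) ↔
      x ∈ ⨅ (i : ℕ) (_ : 1 ≤ i) (N : ModuleCat.{u} R),
        Module.annihilator R
          (((Ext R (ModuleCat.{u} R) i).obj (op (ModuleCat.of R M))).obj N) :=
  factoring_set_eq_iInf_ann_ext_general R M
end

section
/- Let R be a commutative Noetherian ring, M a finitely generated R-module, and let 0 → K → P → M → 0 be any short exact sequence of R-modules with P finitely generated projective. Then ann_R Ext^1_R(M, K) equals the set {x ∈ R : the multiplication map x·id_M : M → M factors through some finitely generated free R-module}; in particular, ann_R Ext^1_R(M, K) is independent of the choice of the projective presentation. -/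
/-!
Splicing `0 → K → P → M → 0` with a projective resolution `Q` of `K` gives a projective
resolution of `M` with `P` in degree `0`. Since `Q₁ → Q₀ → K → 0` is exact, the `1`-cocycles of
`Hom(-, Y)` are the maps `Q₀ → K → Y`, so `x` kills `Ext¹(M, Y)` iff `x • φ` extends along
`ι : K → P` for every `φ : K → Y`; taking `Y = K`, iff `x • id_K` extends along `ι`. By exactness
this is equivalent to `x • id_M` lifting along `π : P → M`, and since `P` is a direct summand of
some `Rⁿ`, to `x • id_M` factoring through a finitely generated free module.
-/

open CategoryTheory Opposite

universe u v

namespace CategoryTheory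

namespace ShortComplex

variable {C : Type*} [Category C] [Preadditive C] {S : ShortComplex C}

lemma Exact.epi_comp_f (hS : S.Exact) {X : C} (e : X ⟶ S.X₁) [Epi e] :
    (ShortComplex.mk (e ≫ S.f) S.g (by simp)).Exact := by
  refine (exact_iff_of_epi_of_isIso_of_mono (S₁ := ShortComplex.mk (e ≫ S.f) S.g (by simp))
    (S₂ := S) ⟨e, 𝟙 _, 𝟙 _, ?_, ?_⟩).2 hS <;> simp

lemma Exact.g_comp_mono (hS : S.Exact) {Y : C} (m : S.X₃ ⟶ Y) [Mono m] :
    (ShortComplex.mk S.f (S.g ≫ m) (by simp)).Exact := by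
  refine (exact_iff_of_epi_of_isIso_of_mono (S₁ := S)
    (S₂ := ShortComplex.mk S.f (S.g ≫ m) (by simp)) ⟨𝟙 _, 𝟙 _, m, ?_, ?_⟩).1 hS <;> simp

end ShortComplex

namespace ProjectiveResolution

variable {C : Type*} [Category C] [Abelian C]

section

variable {Z : C} (Q : ProjectiveResolution Z)

noncomputable def augmentation : Q.complex.X 0 ⟶ Z :=
  (ChainComplex.toSingle₀Equiv _ _ Q.π).1

@[simp]
lemma d_comp_augmentation : Q.complex.d 1 0 ≫ Q.augmentation = 0 :=
  (ChainComplex.toSingle₀Equiv _ _ Q.π).2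

instance : Epi Q.augmentation :=
  inferInstanceAs (Epi (Q.π.f 0))

lemma exact_zero : (ShortComplex.mk _ _ Q.d_comp_augmentation).Exact :=
  ShortComplex.exact_of_g_is_cokernel _ Q.isColimitCokernelCofork

end

noncomputable def ofShortExact {S : ShortComplex C} (hS : S.ShortExact) [Projective S.X₂]
    (Q : ProjectiveResolution S.X₁) : ProjectiveResolution S.X₃ :=
  let K := Q.complex.augment (Q.augmentation ≫ S.f) (by simp [reassoc_of% Q.d_comp_augmentation])
  { complex := K
    projective n := by cases n <;> dsimp [K] <;> infer_instance
    π := (ChainComplex.toSingle₀Equiv _ _).symm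
      ⟨S.g, show (Q.augmentation ≫ S.f) ≫ S.g = 0 by simp⟩
    quasiIso := ⟨fun n => by
      have := hS.mono_f
      rcases n with _ | _ | n
      · rw [ChainComplex.quasiIsoAt₀_iff, ShortComplex.quasiIso_iff_of_zeros']
        · refine (ShortComplex.exact_and_epi_g_iff_of_iso ?_).2
            ⟨hS.exact.epi_comp_f Q.augmentation, hS.epi_g⟩
          exact ShortComplex.isoMk (Iso.refl _) (Iso.refl _) (Iso.refl _)
            ((Category.id_comp _).trans (Category.comp_id _).symm)
            ((Category.id_comp S.g).trans
              ((ChainComplex.toSingle₀Equiv_symm_apply_f_zero (C := K) S.g _).symm.trans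
                (Category.comp_id _).symm))
        all_goals rfl
      · rw [quasiIsoAt_iff_exactAt' _ _ (ChainComplex.exactAt_succ_single_obj _ _),
          HomologicalComplex.exactAt_iff' _ 2 1 0 (by simp) (by simp)]
        exact Q.exact_zero.g_comp_mono S.f
      · rw [quasiIsoAt_iff_exactAt' _ _ (ChainComplex.exactAt_succ_single_obj _ _),
          HomologicalComplex.exactAt_iff' _ (n + 3) (n + 2) (n + 1) (by simp) (by simp)]
        exact Q.exact_succ n⟩ }

end ProjectiveResolution

namespace ShortComplex

variable {R : Type*} [CommRing R]

lemma mem_annihilator_homology_iff_s7 (S : ShortComplex (ModuleCat R)) (x : R) :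
    x ∈ Module.annihilator R S.homology ↔ ∀ b : S.X₂, S.g b = 0 → ∃ a : S.X₁, S.f a = x • b := by
  rw [S.moduleCatHomologyIso.toLinearEquiv.annihilator_eq, Module.mem_annihilator]
  refine ⟨fun h b hb => ?_, fun h m => ?_⟩
  · obtain ⟨a, ha⟩ := (Submodule.Quotient.mk_eq_zero _).1
      ((Submodule.Quotient.mk_smul _ x _).trans (h (Submodule.Quotient.mk ⟨b, hb⟩)))
    exact ⟨a, congrArg Subtype.val ha⟩
  · obtain ⟨⟨b, hb⟩, rfl⟩ := Submodule.Quotient.mk_surjective _ m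
    obtain ⟨a, ha⟩ := h b hb
    exact (Submodule.Quotient.mk_smul _ x _).symm.trans
      ((Submodule.Quotient.mk_eq_zero _).2 ⟨a, Subtype.ext ha⟩)

variable {C : Type*} [Category C] [Abelian C] [Linear R C] {S : ShortComplex C}

lemma ShortExact.exists_f_comp_eq_smul_id_iff (hS : S.ShortExact) (x : R) :
    (∃ ψ : S.X₂ ⟶ S.X₁, S.f ≫ ψ = x • 𝟙 _) ↔ ∃ σ : S.X₃ ⟶ S.X₂, σ ≫ S.g = x • 𝟙 _ := by
  have := hS.mono_f
  have := hS.epi_g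
  constructor
  · rintro ⟨ψ, hψ⟩
    refine ⟨hS.exact.desc (x • 𝟙 _ - ψ ≫ S.f) (by simp [reassoc_of% hψ]), ?_⟩
    rw [← cancel_epi S.g, hS.exact.g_desc_assoc]
    simp
  · rintro ⟨σ, hσ⟩
    refine ⟨hS.exact.lift (x • 𝟙 _ - S.g ≫ σ) (by simp [hσ]), ?_⟩
    rw [← cancel_mono S.f, Category.assoc, hS.exact.lift_f]
    simp

variable [EnoughProjectives C] (hS : S.ShortExact) [Projective S.X₂]
include hS

lemma ShortExact.mem_annihilator_Ext_one_iff_forall (x : R) (Y : C) :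
    x ∈ Module.annihilator R (((Ext R C 1).obj (Opposite.op S.X₃)).obj Y) ↔
      ∀ φ : S.X₁ ⟶ Y, ∃ ψ : S.X₂ ⟶ Y, S.f ≫ ψ = x • φ := by
  let Q := projectiveResolution S.X₁
  let T := ProjectiveResolution.ofShortExact hS Q
  rw [(T.isoExt 1 Y ≪≫ (T.complex.linearYonedaObj R Y).homologyIsoSc' 0 1 2 (by simp)
    (by simp)).toLinearEquiv.annihilator_eq, mem_annihilator_homology_iff_s7]
  change (∀ φ : Q.complex.X 0 ⟶ Y, Q.complex.d 1 0 ≫ φ = 0 →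
    ∃ ψ : S.X₂ ⟶ Y, (Q.augmentation ≫ S.f) ≫ ψ = x • φ) ↔ _
  constructor
  · intro h φ
    obtain ⟨ψ, hψ⟩ := h (Q.augmentation ≫ φ) (by simp [reassoc_of% Q.d_comp_augmentation])
    refine ⟨ψ, (cancel_epi Q.augmentation).1 ?_⟩
    rw [← Category.assoc, hψ, Linear.comp_smul]
  · intro h φ hφ
    obtain ⟨ψ, hψ⟩ := h (Q.exact_zero.desc φ hφ)
    refine ⟨ψ, ?_⟩
    rw [Category.assoc, hψ, Linear.comp_smul, Q.exact_zero.g_desc]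

lemma ShortExact.mem_annihilator_Ext_one_iff (x : R) :
    x ∈ Module.annihilator R (((Ext R C 1).obj (Opposite.op S.X₃)).obj S.X₁) ↔
      ∃ ψ : S.X₂ ⟶ S.X₁, S.f ≫ ψ = x • 𝟙 _ := by
  rw [hS.mem_annihilator_Ext_one_iff_forall]
  refine ⟨fun h => h (𝟙 _), fun ⟨ψ, hψ⟩ φ => ⟨ψ ≫ φ, ?_⟩⟩
  rw [reassoc_of% hψ, Linear.smul_comp, Category.id_comp]

end ShortComplex

end CategoryTheory

lemma ModuleCat.exists_comp_ofHom_eq_smul_id_iff {R : Type*} [CommRing R] {M P : Type v}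
    [AddCommGroup M] [Module R M] [AddCommGroup P] [Module R P] (π : P →ₗ[R] M) (x : R) :
    (∃ σ : ModuleCat.of R M ⟶ ModuleCat.of R P, σ ≫ ModuleCat.ofHom π = x • 𝟙 _) ↔
      ∃ σ : M →ₗ[R] P, π ∘ₗ σ = x • LinearMap.id :=
  ⟨fun ⟨σ, h⟩ => ⟨σ.hom, congrArg ModuleCat.Hom.hom h⟩,
    fun ⟨σ, h⟩ => ⟨ModuleCat.ofHom σ, ModuleCat.hom_ext h⟩⟩

lemma exists_comp_eq_iff_factors_through_fin_free {R : Type*} [CommRing R] {M N P : Type*}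
    [AddCommGroup M] [Module R M] [AddCommGroup N] [Module R N] [AddCommGroup P] [Module R P]
    [Module.Finite R P] [Module.Projective R P] {π : P →ₗ[R] M} (hπ : Function.Surjective π)
    (u : N →ₗ[R] M) :
    (∃ σ : N →ₗ[R] P, π ∘ₗ σ = u) ↔
      ∃ (n : ℕ) (g : N →ₗ[R] (Fin n → R)) (f : (Fin n → R) →ₗ[R] M), f ∘ₗ g = u := by
  constructor
  · rintro ⟨σ, rfl⟩
    obtain ⟨n, q, hq⟩ := Module.Finite.exists_fin' R P
    obtain ⟨s, hs⟩ := Module.projective_lifting_property q LinearMap.id hq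
    exact ⟨n, s ∘ₗ σ, π ∘ₗ q,
      by rw [LinearMap.comp_assoc, ← LinearMap.comp_assoc σ s q, hs, LinearMap.id_comp]⟩
  · rintro ⟨n, g, f, rfl⟩
    obtain ⟨h, hh⟩ := Module.projective_lifting_property π f hπ
    exact ⟨h ∘ₗ g, by rw [← LinearMap.comp_assoc, hh]⟩

theorem ann_ext_one_syzygy_eq_factoring_set_general (R : Type u) [CommRing R]
    (M : Type u) [AddCommGroup M] [Module R M]
    (K P : Type u) [AddCommGroup K] [Module R K] [AddCommGroup P] [Module R P]
    [Module.Finite R P] [Module.Projective R P]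
    (ι : K →ₗ[R] P) (π : P →ₗ[R] M)
    (hι : Function.Injective ι) (hexact : Function.Exact ι π)
    (hπ : Function.Surjective π) :
    ∀ x : R,
      x ∈ Module.annihilator R
          (((Ext R (ModuleCat.{u} R) 1).obj (op (ModuleCat.of R M))).obj (ModuleCat.of R K)) ↔
      ∃ (n : ℕ) (g : M →ₗ[R] (Fin n → R)) (f : (Fin n → R) →ₗ[R] M),
        f ∘ₗ g = x • (LinearMap.id : M →ₗ[R] M) := by
  intro x
  have hS : (ModuleCat.shortComplexOfCompEqZero ι π hexact.linearMap_comp_eq_zero).ShortExact :=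
    ModuleCat.shortComplex_shortExact _ hexact hι hπ
  have : Projective (ModuleCat.of R P) := (IsProjective.iff_projective P).mp inferInstance
  rw [hS.mem_annihilator_Ext_one_iff, hS.exists_f_comp_eq_smul_id_iff]
  exact (ModuleCat.exists_comp_ofHom_eq_smul_id_iff π x).trans
    (exists_comp_eq_iff_factors_through_fin_free hπ _)

/-- Let `R` be a commutative Noetherian ring, `M` a finitely generated `R`-module, and
`0 → K → P → M → 0` a short exact sequence with `P` finitely generated projective.  Then the
annihilator of `Ext¹_R(M, K)` equals the set of `x ∈ R` such that multiplication by `x` on `M`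
factors through a finitely generated free `R`-module; in particular it is independent of the
chosen projective presentation. -/
theorem ann_ext_one_syzygy_eq_factoring_set (R : Type u) [CommRing R] [IsNoetherianRing R]
    (M : Type u) [AddCommGroup M] [Module R M] [Module.Finite R M]
    (K P : Type u) [AddCommGroup K] [Module R K] [AddCommGroup P] [Module R P]
    [Module.Finite R P] [Module.Projective R P]
    (ι : K →ₗ[R] P) (π : P →ₗ[R] M)
    (hι : Function.Injective ι) (hexact : Function.Exact ι π)
    (hπ : Function.Surjective π) :
    ∀ x : R,
      x ∈ Module.annihilator R
          (((Ext R (ModuleCat.{u} R) 1).obj (op (ModuleCat.of R M))).obj (ModuleCat.of R K)) ↔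
      ∃ (n : ℕ) (g : M →ₗ[R] (Fin n → R)) (f : (Fin n → R) →ₗ[R] M),
        f ∘ₗ g = x • (LinearMap.id : M →ₗ[R] M) :=
  ann_ext_one_syzygy_eq_factoring_set_general R M K P ι π hι hexact hπ
end

section
/- Let R be a commutative Noetherian ring and let M be a finitely generated R-submodule of the total ring of fractions Q(R) containing the image of a non-zero-divisor of R. If r ∈ R is such that the multiplication map r·id_M : M → M factors through a finitely generated free R-module, then r lies in (R : M)·M, where (R : M) = {q ∈ Q(R) : q·M ⊆ R} (identifying R with its image in Q(R)). -/
universe u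

/-- Let `R` be a commutative Noetherian ring and `M` a finitely generated `R`-submodule of the
total ring of fractions `Q(R)` containing the image of a non-zero-divisor of `R`.  If
multiplication by `r ∈ R` on `M` factors through a finitely generated free `R`-module, then the
image of `r` in `Q(R)` lies in `(R : M)·M`, where `(R : M) = {q ∈ Q(R) : q·M ⊆ R}`. -/
theorem factoring_mem_colon_mul (R : Type u) [CommRing R] [IsNoetherianRing R]
    (M : Submodule R (Localization (nonZeroDivisors R)))
    (hfg : M.FG)
    (hreg : ∃ r ∈ nonZeroDivisors R,
      algebraMap R (Localization (nonZeroDivisors R)) r ∈ M)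
    (r : R)
    (h : ∃ (n : ℕ) (g : ↥M →ₗ[R] (Fin n → R)) (f : (Fin n → R) →ₗ[R] ↥M),
      f ∘ₗ g = r • (LinearMap.id : ↥M →ₗ[R] ↥M)) :
    algebraMap R (Localization (nonZeroDivisors R)) r ∈
      ((1 : Submodule R (Localization (nonZeroDivisors R))) / M) * M := by
  set K := Localization (nonZeroDivisors R) with hK
  obtain ⟨t₀, ht₀, htM⟩ := hreg
  obtain ⟨n, g, f, hfgid⟩ := h
  set telt : ↥M := ⟨algebraMap R K t₀, htM⟩ with htelt
  obtain ⟨u, hu⟩ : IsUnit (algebraMap R K t₀) :=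
    IsLocalization.map_units K (⟨t₀, ht₀⟩ : nonZeroDivisors R)
  have huinv : algebraMap R K t₀ * ↑u⁻¹ = 1 := by rw [← hu]; exact u.mul_inv
  -- key : any linear functional φ : M → R acts as multiplication by φ(telt)/t₀
  have key : ∀ (φ : ↥M →ₗ[R] R) (x : ↥M),
      algebraMap R K (φ x) * algebraMap R K t₀ = algebraMap R K (φ telt) * (x : K) := by
    intro φ x
    obtain ⟨⟨a, s⟩, hs⟩ := IsLocalization.surj (nonZeroDivisors R) (x : K)
    have h1 : (t₀ • ((s : R) • x) : ↥M) = a • telt := by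
      apply Subtype.ext
      show (t₀ : R) • ((s : R) • (x : K)) = a • (algebraMap R K t₀)
      simp only [Algebra.smul_def]
      rw [mul_comm (algebraMap R K (s : R)) (x : K), hs]
      ring
    have h2 : t₀ * ((s : R) * φ x) = a * φ telt := by
      have := congrArg φ h1
      simpa [smul_eq_mul, mul_assoc] using this
    have e := congrArg (algebraMap R K) h2
    simp only [map_mul] at e
    refine (IsLocalization.map_units K s).mul_right_cancel ?_
    linear_combination e - algebraMap R K (φ telt) * hs
  -- the multipliers
  set φ : Fin n → (↥M →ₗ[R] R) := fun i => LinearMap.proj i ∘ₗ g with hφ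
  set q : Fin n → K := fun i => algebraMap R K (φ i telt) * ↑u⁻¹ with hq
  have hqmem : ∀ i, q i ∈ (1 : Submodule R K) / M := by
    intro i
    rw [Submodule.mem_div_iff_forall_mul_mem]
    intro m hm
    rw [Submodule.mem_one]
    refine ⟨φ i ⟨m, hm⟩, ?_⟩
    have hk := key (φ i) ⟨m, hm⟩
    simp only [hq]
    linear_combination (↑u⁻¹ : K) * hk - algebraMap R K (φ i ⟨m, hm⟩) * huinv
  -- decompose r • telt
  have hsum : (r • telt : ↥M) = ∑ i, (g telt i) • f (Pi.single i 1) := by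
    have : f (g telt) = r • telt := by
      have := congrArg (fun ψ => ψ telt) hfgid
      simpa using this
    rw [← this]
    have hv : g telt = ∑ i, (g telt i) • (Pi.single i (1 : R) : Fin n → R) := by
      conv_lhs => rw [← Finset.univ_sum_single (g telt)]
      refine Finset.sum_congr rfl fun i _ => ?_
      rw [← Pi.single_smul, smul_eq_mul, mul_one]
    conv_lhs => rw [hv]
    rw [map_sum]
    simp [map_smul]
  have hcoe : algebraMap R K r * algebraMap R K t₀ =
      ∑ i, algebraMap R K (g telt i) * ((f (Pi.single i 1) : ↥M) : K) := by
    have := congrArg (fun x : ↥M => (x : K)) hsum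
    simpa [Algebra.smul_def, Submodule.coe_sum] using this
  have hfinal : algebraMap R K r = ∑ i, q i * ((f (Pi.single i 1) : ↥M) : K) := by
    have expand : ∑ i, q i * ((f (Pi.single i 1) : ↥M) : K) =
        (∑ i, algebraMap R K (g telt i) * ((f (Pi.single i 1) : ↥M) : K)) * ↑u⁻¹ := by
      rw [Finset.sum_mul]
      refine Finset.sum_congr rfl fun i _ => ?_
      simp only [hq, hφ]
      simp only [LinearMap.comp_apply, LinearMap.proj_apply]
      ring
    rw [expand, ← hcoe]
    linear_combination -(algebraMap R K r) * huinv
  rw [hfinal]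
  exact Submodule.sum_mem _ fun i _ =>
    Submodule.mul_mem_mul (hqmem i) (f (Pi.single i 1)).2
end

section
/- Let R be a commutative Noetherian ring with total ring of fractions Q(R) and integral closure R̄ of R in Q(R). Then the trace ideal of the R-module R̄ equals the conductor: Tr_R(R̄) = 𝒞(R) = (R : R̄). -/
/-!
Let `S` be an `R`-subalgebra of the total ring of fractions `K` (the integral closure, say).
Every `R`-linear `f : S → R` is automatically `S`-linear inside `K`: for `x = a / s` one has
`s f(xy) = f(ay) = a f(y)`, so `f(xy) = x f(y)`. Hence `f(y) x = f(xy) ∈ R` for all `x ∈ S`,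
i.e. every value of `f` lies in the conductor `(R : S)`. Conversely, multiplication by an
element `q` of the conductor is an `R`-linear map `S → R` with value `q` at `1`.
-/

universe u

namespace Subalgebra

variable {R K : Type*} [CommRing R] [CommRing K] [Algebra R K]

/-- The conductor `(R : S) = {q ∈ K | q S ⊆ R}`. -/
abbrev conductor (S : Subalgebra R K) : Submodule R K :=
  1 / toSubmodule S

theorem algebraMap_linearMap_mul (M : Submonoid R) [IsLocalization M K] {S : Subalgebra R K}
    (f : S →ₗ[R] R) (x y : S) :
    algebraMap R K (f (x * y)) = x * algebraMap R K (f y) := by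
  obtain ⟨⟨a, s⟩, hxs⟩ := IsLocalization.surj M (x : K)
  dsimp only at hxs
  have hsx : (s : R) • x = a • (1 : S) := by
    ext
    rw [SetLike.val_smul, SetLike.val_smul, OneMemClass.coe_one, Algebra.smul_def,
      Algebra.smul_def, mul_one, mul_comm, hxs]
  apply (IsLocalization.map_units K s).mul_left_cancel
  calc algebraMap R K s * algebraMap R K (f (x * y))
      = algebraMap R K (f ((s : R) • (x * y))) := by
        rw [map_smul, smul_eq_mul, map_mul (algebraMap R K)]
    _ = algebraMap R K (f (a • y)) := by rw [← smul_mul_assoc, hsx, smul_mul_assoc, one_mul]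
    _ = algebraMap R K s * (x * algebraMap R K (f y)) := by
        rw [map_smul, smul_eq_mul, map_mul (algebraMap R K), ← hxs]
        ring

theorem algebraMap_linearMap_mem_conductor (M : Submonoid R) [IsLocalization M K]
    {S : Subalgebra R K} (f : S →ₗ[R] R) (y : S) : algebraMap R K (f y) ∈ S.conductor := by
  refine Submodule.mem_div_iff_forall_mul_mem.mpr fun x hx => ?_
  rw [mul_comm, ← algebraMap_linearMap_mul M f ⟨x, hx⟩ y]
  exact Submodule.algebraMap_mem _

variable [IsFractionRing R K] (S : Subalgebra R K)

noncomputable def mulOfMemConductor (q : K) (hq : q ∈ S.conductor) : S →ₗ[R] R :=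
  (LinearEquiv.ofInjective (Algebra.linearMap R K) (IsFractionRing.injective R K)).symm.toLinearMap
    ∘ₗ (LinearMap.mulLeft R q ∘ₗ S.val.toLinearMap).codRestrict _ fun x => by
      simpa [← Submodule.one_eq_range] using Submodule.mem_div_iff_forall_mul_mem.mp hq x x.2

theorem algebraMap_mulOfMemConductor (q : K) (hq : q ∈ S.conductor) (x : S) :
    algebraMap R K (S.mulOfMemConductor q hq x) = q * x :=
  LinearEquiv.ofInjective_symm_apply (f := Algebra.linearMap R K)
    (h := IsFractionRing.injective R K) _

end Subalgebra

theorem Subalgebra.map_traceIdeal_eq_conductor {R K : Type u} [CommRing R] [CommRing K]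
    [Algebra R K] [IsFractionRing R K] (S : Subalgebra R K) :
    Submodule.map (Algebra.linearMap R K) (traceIdeal R S) = S.conductor := by
  apply le_antisymm
  · rw [traceIdeal, Submodule.map_iSup, iSup_le_iff]
    rintro f _ ⟨_, ⟨y, rfl⟩, rfl⟩
    exact algebraMap_linearMap_mem_conductor (nonZeroDivisors R) f y
  · intro q hq
    refine ⟨S.mulOfMemConductor q hq 1, ?_, ?_⟩
    · exact Submodule.mem_iSup_of_mem (S.mulOfMemConductor q hq) ⟨1, rfl⟩
    · rw [Algebra.linearMap_apply, algebraMap_mulOfMemConductor, OneMemClass.coe_one, mul_one]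

theorem trace_integralClosure_eq_conductor_general (R : Type u) [CommRing R] :
    letI Q := Localization (nonZeroDivisors R)
    Submodule.map (Algebra.linearMap R Q)
        (traceIdeal R ↥(integralClosure R Q)) =
      (1 : Submodule R Q) / (Subalgebra.toSubmodule (integralClosure R Q)) :=
  (integralClosure R _).map_traceIdeal_eq_conductor

/-- Let `R` be a commutative Noetherian ring with total ring of fractions `Q(R)` and integral
closure `R̄` of `R` in `Q(R)`.  Then the trace ideal of the `R`-module `R̄` equals the conductor
`𝒞(R) = (R : R̄)` (both viewed inside `Q(R)`). -/
theorem trace_integralClosure_eq_conductor (R : Type u) [CommRing R] [IsNoetherianRing R] :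
    letI Q := Localization (nonZeroDivisors R)
    Submodule.map (Algebra.linearMap R Q)
        (traceIdeal R ↥(integralClosure R Q)) =
      (1 : Submodule R Q) / (Subalgebra.toSubmodule (integralClosure R Q)) :=
  trace_integralClosure_eq_conductor_general R
end

section
/- Let R be a commutative Noetherian ring with total ring of fractions Q(R), integral closure R̄ of R in Q(R), and conductor 𝒞(R) = (R : R̄). Then the trace ideal of the conductor equals itself: Tr_R(𝒞(R)) = 𝒞(R). -/
universe u

/-!
If `c ∈ 𝒞` and `t ∈ R̄`, then `r = c t` lies in `R`, and even in `𝒞` because `R̄` is a ring.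
Writing `t = a / s`, we get `s r = a c` in `R` (up to a unit of the localization), so any
`f : 𝒞 → R` satisfies `s f(r) = a f(c)`, i.e. `f(c) t = f(r) ∈ R`. Hence `f(c) ∈ 𝒞`.
-/

theorem Ideal.le_traceIdeal {R : Type u} [CommRing R] (I : Ideal R) : I ≤ traceIdeal R I :=
  (Submodule.range_subtype I).ge.trans
    (le_iSup (fun f : I →ₗ[R] R => LinearMap.range f) I.subtype)

namespace IsLocalization

variable {R : Type*} [CommRing R] (M : Submonoid R) {Q : Type*} [CommRing Q] [Algebra R Q]

/-- `R`-linear maps out of an ideal commute with multiplication by fractions. -/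
theorem algebraMap_apply_eq_mul_of_algebraMap_eq_mul [IsLocalization M Q] {I : Ideal R}
    (f : I →ₗ[R] R) {c r : I} {t : Q} (h : algebraMap R Q r = t * algebraMap R Q c) :
    algebraMap R Q (f r) = t * algebraMap R Q (f c) := by
  obtain ⟨⟨a, s⟩, rfl⟩ := mk'_surjective M t
  dsimp only at h ⊢
  have hsr : algebraMap R Q (s * r) = algebraMap R Q (a * c) := by
    rw [map_mul, h, ← mul_assoc, mk'_spec', map_mul]
  obtain ⟨u, hu⟩ := (eq_iff_exists M Q).mp hsr
  have hI : ((u * s : R) • r : I) = ((u * a : R) • c : I) := by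
    ext
    simpa only [Submodule.coe_smul, smul_eq_mul, mul_assoc] using hu
  have hf : u * s * f r = u * a * f c := by
    simpa only [map_smul, smul_eq_mul] using congrArg f hI
  rw [mul_comm, mul_mk'_eq_mk'_of_mul, eq_mk'_iff_mul_eq, ← map_mul, eq_iff_exists M Q]
  exact ⟨u, by linear_combination hf⟩

end IsLocalization

namespace Subalgebra

variable {R : Type u} [CommRing R] {Q : Type*} [CommRing Q] [Algebra R Q]

/-- The conductor `(R : A) = {x ∈ R | x A ⊆ R}` of an `R`-subalgebra `A` of `Q`. -/
def conductorIdeal (A : Subalgebra R Q) : Ideal R :=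
  Submodule.comap (Algebra.linearMap R Q) (1 / Subalgebra.toSubmodule A)

variable {A : Subalgebra R Q}

theorem mem_conductorIdeal_iff {x : R} :
    x ∈ A.conductorIdeal ↔ ∀ t ∈ A, ∃ r : R, algebraMap R Q r = algebraMap R Q x * t := by
  simp only [conductorIdeal, Submodule.mem_comap, Submodule.mem_div_iff_forall_mul_mem,
    Submodule.mem_one, Subalgebra.mem_toSubmodule, Algebra.linearMap_apply]

theorem mem_conductorIdeal_of_algebraMap_eq_mul {c : R} (hc : c ∈ A.conductorIdeal) {t : Q}
    (ht : t ∈ A) {r : R} (hr : algebraMap R Q r = algebraMap R Q c * t) :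
    r ∈ A.conductorIdeal := by
  refine mem_conductorIdeal_iff.mpr fun t' ht' => ?_
  rw [hr, mul_assoc]
  exact mem_conductorIdeal_iff.mp hc _ (A.mul_mem ht ht')

theorem traceIdeal_conductorIdeal_le (M : Submonoid R) [IsLocalization M Q] :
    traceIdeal R A.conductorIdeal ≤ A.conductorIdeal := by
  refine iSup_le fun f => ?_
  rintro _ ⟨c, rfl⟩
  refine mem_conductorIdeal_iff.mpr fun t ht => ?_
  obtain ⟨r, hr⟩ := mem_conductorIdeal_iff.mp c.2 t ht
  let r' : A.conductorIdeal := ⟨r, mem_conductorIdeal_of_algebraMap_eq_mul c.2 ht hr⟩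
  refine ⟨f r', ?_⟩
  rw [IsLocalization.algebraMap_apply_eq_mul_of_algebraMap_eq_mul M f (c := c) (r := r')
    (by rw [hr, mul_comm]), mul_comm]

theorem traceIdeal_conductorIdeal (M : Submonoid R) [IsLocalization M Q] :
    traceIdeal R A.conductorIdeal = A.conductorIdeal :=
  (traceIdeal_conductorIdeal_le M).antisymm A.conductorIdeal.le_traceIdeal

end Subalgebra

theorem trace_conductor_eq_conductor_general (R : Type u) [CommRing R] :
    letI Q := Localization (nonZeroDivisors R)
    letI C : Ideal R := Submodule.comap (Algebra.linearMap R Q)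
      ((1 : Submodule R Q) / (Subalgebra.toSubmodule (integralClosure R Q)))
    traceIdeal R ↥C = C :=
  (integralClosure R (Localization (nonZeroDivisors R))).traceIdeal_conductorIdeal
    (nonZeroDivisors R)

/-- Let `R` be a commutative Noetherian ring with total ring of fractions `Q(R)`, integral
closure `R̄` of `R` in `Q(R)`, and conductor `𝒞(R) = (R : R̄)`, viewed as an ideal of `R`.
Then the trace ideal of the `R`-module `𝒞(R)` equals `𝒞(R)` itself. -/
theorem trace_conductor_eq_conductor (R : Type u) [CommRing R] [IsNoetherianRing R] :
    letI Q := Localization (nonZeroDivisors R)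
    letI C : Ideal R := Submodule.comap (Algebra.linearMap R Q)
      ((1 : Submodule R Q) / (Subalgebra.toSubmodule (integralClosure R Q)))
    traceIdeal R ↥C = C :=
  trace_conductor_eq_conductor_general R
end
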